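/- Let u, v, p, q : ℝ³ → ℝ be smooth functions of (t, x, y) and λ ∈ ℝ, and suppose that at every point p_t = J(u, p), 0 = J(v, p), q_t = J(u, q) + J(Δv + λ·E(u), p), and 0 = J(v, q) + J(Δu + λ·E(v), p). Then J(G2, q) + J(G1 + λ·E(G2), p) = 0 at every point, where G1 := (Δu)_t − J(u, Δu) + J(v, Δv) and G2 := v_t − J(u, v). -/

import Mathlib

noncomputable section

/-- Partial derivative in `t` of a function of `(t, x, y)`. -/
def pt3 (f : ℝ × ℝ × ℝ → ℝ) (P : ℝ × ℝ × ℝ) : ℝ :=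
  deriv (fun w => f (w, P.2.1, P.2.2)) P.1

/-- Partial derivative in `x` of a function of `(t, x, y)`. -/
def px3 (f : ℝ × ℝ × ℝ → ℝ) (P : ℝ × ℝ × ℝ) : ℝ :=
  deriv (fun w => f (P.1, w, P.2.2)) P.2.1

/-- Partial derivative in `y` of a function of `(t, x, y)`. -/
def py3 (f : ℝ × ℝ × ℝ → ℝ) (P : ℝ × ℝ × ℝ) : ℝ :=
  deriv (fun w => f (P.1, P.2.1, w)) P.2.2

/-- Jacobi bracket `J(f, g) = f_x g_y - f_y g_x`. -/
def J3 (f g : ℝ × ℝ × ℝ → ℝ) : ℝ × ℝ × ℝ → ℝ :=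
  fun P => px3 f P * py3 g P - py3 f P * px3 g P

/-- Planar Laplacian `Δf = f_xx + f_yy`. -/
def lap3 (f : ℝ × ℝ × ℝ → ℝ) : ℝ × ℝ × ℝ → ℝ :=
  fun P => px3 (px3 f) P + py3 (py3 f) P

/-- The operator `E(f) = x f_x + y f_y - 2 f`. -/
def Eop3 (f : ℝ × ℝ × ℝ → ℝ) : ℝ × ℝ × ℝ → ℝ :=
  fun P => P.2.1 * px3 f P + P.2.2 * py3 f P - 2 * f P

/-- `G1 = (Δu)_t - J(u, Δu) + J(v, Δv)`. -/
def G1 (u v : ℝ × ℝ × ℝ → ℝ) : ℝ × ℝ × ℝ → ℝ :=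
  fun P => pt3 (lap3 u) P - J3 u (lap3 u) P + J3 v (lap3 v) P

/-- `G2 = v_t - J(u, v)`. -/
def G2 (u v : ℝ × ℝ × ℝ → ℝ) : ℝ × ℝ × ℝ → ℝ :=
  fun P => pt3 v P - J3 u v P

namespace Aux
open scoped ContDiff

def Dw (w : ℝ × ℝ × ℝ) (f : ℝ × ℝ × ℝ → ℝ) : ℝ × ℝ × ℝ → ℝ :=
  fun P => fderiv ℝ f P w

def et : ℝ × ℝ × ℝ := (1, 0, 0)
def ex : ℝ × ℝ × ℝ := (0, 1, 0)
def ey : ℝ × ℝ × ℝ := (0, 0, 1)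

theorem Dw_contDiff (w : ℝ × ℝ × ℝ) {f : ℝ × ℝ × ℝ → ℝ} (hf : ContDiff ℝ ∞ f) :
    ContDiff ℝ ∞ (Dw w f) :=
  ((contDiff_infty_iff_fderiv.mp hf).2).clm_apply contDiff_const

theorem Dw_diff (w : ℝ × ℝ × ℝ) {f : ℝ × ℝ × ℝ → ℝ} (hf : ContDiff ℝ ∞ f) :
    Differentiable ℝ (Dw w f) :=
  (Dw_contDiff w hf).differentiable (by norm_num)

theorem pt3_eq {f : ℝ × ℝ × ℝ → ℝ} (hf : Differentiable ℝ f) : pt3 f = Dw et f := by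
  funext P
  have h1 : HasDerivAt (fun w : ℝ => (w, P.2.1, P.2.2)) ((1:ℝ), (0:ℝ), (0:ℝ)) P.1 :=
    (hasDerivAt_id P.1).prodMk ((hasDerivAt_const _ _).prodMk (hasDerivAt_const _ _))
  have h2 := ((hf (P.1, P.2.1, P.2.2)).hasFDerivAt.comp_hasDerivAt P.1 h1)
  simpa [pt3, Dw, et, Function.comp_def] using h2.deriv

theorem px3_eq {f : ℝ × ℝ × ℝ → ℝ} (hf : Differentiable ℝ f) : px3 f = Dw ex f := by
  funext P
  have h1 : HasDerivAt (fun w : ℝ => (P.1, w, P.2.2)) ((0:ℝ), (1:ℝ), (0:ℝ)) P.2.1 :=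
    (hasDerivAt_const _ _).prodMk ((hasDerivAt_id _).prodMk (hasDerivAt_const _ _))
  have h2 := ((hf (P.1, P.2.1, P.2.2)).hasFDerivAt.comp_hasDerivAt P.2.1 h1)
  simpa [px3, Dw, ex, Function.comp_def] using h2.deriv

theorem py3_eq {f : ℝ × ℝ × ℝ → ℝ} (hf : Differentiable ℝ f) : py3 f = Dw ey f := by
  funext P
  have h1 : HasDerivAt (fun w : ℝ => (P.1, P.2.1, w)) ((0:ℝ), (0:ℝ), (1:ℝ)) P.2.2 :=
    (hasDerivAt_const _ _).prodMk ((hasDerivAt_const _ _).prodMk (hasDerivAt_id _))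
  have h2 := ((hf (P.1, P.2.1, P.2.2)).hasFDerivAt.comp_hasDerivAt P.2.2 h1)
  simpa [py3, Dw, ey, Function.comp_def] using h2.deriv


variable {f g : ℝ × ℝ × ℝ → ℝ} {w a b : ℝ × ℝ × ℝ} {c : ℝ}

theorem Dw_add (hf : Differentiable ℝ f) (hg : Differentiable ℝ g) :
    Dw w (fun P => f P + g P) = fun P => Dw w f P + Dw w g P := by
  funext P
  simp [Dw, fderiv_fun_add (hf P) (hg P)]

theorem Dw_sub (hf : Differentiable ℝ f) (hg : Differentiable ℝ g) :
    Dw w (fun P => f P - g P) = fun P => Dw w f P - Dw w g P := by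
  funext P
  simp [Dw, fderiv_fun_sub (hf P) (hg P)]

theorem Dw_mul (hf : Differentiable ℝ f) (hg : Differentiable ℝ g) :
    Dw w (fun P => f P * g P) = fun P => f P * Dw w g P + g P * Dw w f P := by
  funext P
  simp [Dw, fderiv_fun_mul (hf P) (hg P)]

theorem Dw_const_mul (hf : Differentiable ℝ f) (c : ℝ) :
    Dw w (fun P => c * f P) = fun P => c * Dw w f P := by
  funext P
  simp [Dw, fderiv_const_mul (hf P)]

theorem Dw_const (c : ℝ) : Dw w (fun _ => c) = fun _ => 0 := by
  funext P; simp [Dw]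

theorem Dw_coord_x : Dw w (fun P : ℝ × ℝ × ℝ => P.2.1) = fun _ => w.2.1 := by
  funext P
  have h : (fun P : ℝ × ℝ × ℝ => P.2.1)
      = ⇑((ContinuousLinearMap.fst ℝ ℝ ℝ).comp (ContinuousLinearMap.snd ℝ ℝ (ℝ × ℝ))) := rfl
  show fderiv ℝ _ P w = w.2.1
  rw [h, ContinuousLinearMap.fderiv]
  rfl

theorem Dw_coord_y : Dw w (fun P : ℝ × ℝ × ℝ => P.2.2) = fun _ => w.2.2 := by
  funext P
  have h : (fun P : ℝ × ℝ × ℝ => P.2.2)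
      = ⇑((ContinuousLinearMap.snd ℝ ℝ ℝ).comp (ContinuousLinearMap.snd ℝ ℝ (ℝ × ℝ))) := rfl
  show fderiv ℝ _ P w = w.2.2
  rw [h, ContinuousLinearMap.fderiv]
  rfl

theorem Dw_comm (hf : ContDiff ℝ ∞ f) (a b : ℝ × ℝ × ℝ) :
    Dw a (Dw b f) = Dw b (Dw a f) := by
  have hd : Differentiable ℝ (fderiv ℝ f) :=
    ((contDiff_infty_iff_fderiv.mp hf).2).differentiable (by norm_num)
  have key : ∀ (v w : ℝ × ℝ × ℝ) (P : ℝ × ℝ × ℝ),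
      Dw v (Dw w f) P = fderiv ℝ (fderiv ℝ f) P v w := by
    intro v w P
    have h : Dw w f = fun P => (fderiv ℝ f P) ((fun _ : ℝ × ℝ × ℝ => w) P) := rfl
    rw [Dw, h, fderiv_clm_apply (hd P) (differentiableAt_const w)]
    simp
  funext P
  rw [key, key]
  exact (hf.contDiffAt.isSymmSndFDerivAt (by simp only [minSmoothness_of_isRCLikeNormedField]; exact WithTop.coe_le_coe.mpr le_top)) a b

def Jw (f g : ℝ × ℝ × ℝ → ℝ) : ℝ × ℝ × ℝ → ℝ :=
  fun P => Dw ex f P * Dw ey g P - Dw ey f P * Dw ex g P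

def Ew (f : ℝ × ℝ × ℝ → ℝ) : ℝ × ℝ × ℝ → ℝ :=
  fun P => P.2.1 * Dw ex f P + P.2.2 * Dw ey f P - 2 * f P

theorem Jw_contDiff (hf : ContDiff ℝ ∞ f) (hg : ContDiff ℝ ∞ g) :
    ContDiff ℝ ∞ (Jw f g) :=
  ((Dw_contDiff ex hf).mul (Dw_contDiff ey hg)).sub
    ((Dw_contDiff ey hf).mul (Dw_contDiff ex hg))

theorem contDiff_cx : ContDiff ℝ ∞ (fun P : ℝ × ℝ × ℝ => P.2.1) :=
  contDiff_fst.comp contDiff_snd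

theorem contDiff_cy : ContDiff ℝ ∞ (fun P : ℝ × ℝ × ℝ => P.2.2) :=
  contDiff_snd.comp contDiff_snd

theorem Ew_contDiff (hf : ContDiff ℝ ∞ f) : ContDiff ℝ ∞ (Ew f) :=
  ((contDiff_cx.mul (Dw_contDiff ex hf)).add
    (contDiff_cy.mul (Dw_contDiff ey hf))).sub (contDiff_const.mul hf)

theorem Dw_Jw (w : ℝ × ℝ × ℝ) (hf : ContDiff ℝ ∞ f) (hg : ContDiff ℝ ∞ g) :
    Dw w (Jw f g) = fun P =>
      Dw w (Dw ex f) P * Dw ey g P + Dw ex f P * Dw w (Dw ey g) P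
      - Dw w (Dw ey f) P * Dw ex g P - Dw ey f P * Dw w (Dw ex g) P := by
  have h1 := Dw_mul (w := w) (Dw_diff ex hf) (Dw_diff ey hg)
  have h2 := Dw_mul (w := w) (Dw_diff ey hf) (Dw_diff ex hg)
  have h0 := Dw_sub (w := w) ((Dw_diff ex hf).fun_mul (Dw_diff ey hg))
    ((Dw_diff ey hf).fun_mul (Dw_diff ex hg))
  show Dw w (fun P => Dw ex f P * Dw ey g P - Dw ey f P * Dw ex g P) = _
  rw [h0, h1, h2]
  funext P; ring

theorem Dw_Ew (w : ℝ × ℝ × ℝ) (hf : ContDiff ℝ ∞ f) :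
    Dw w (Ew f) = fun P =>
      w.2.1 * Dw ex f P + P.2.1 * Dw w (Dw ex f) P
      + w.2.2 * Dw ey f P + P.2.2 * Dw w (Dw ey f) P - 2 * Dw w f P := by
  have h1 := Dw_mul (w := w) (contDiff_cx.differentiable (by norm_num)) (Dw_diff ex hf)
  have h2 := Dw_mul (w := w) (contDiff_cy.differentiable (by norm_num)) (Dw_diff ey hf)
  have h3 := Dw_const_mul (w := w) (hf.differentiable (by norm_num)) 2
  have h0 := Dw_sub (w := w)
    (f := fun P => P.2.1 * Dw ex f P + P.2.2 * Dw ey f P) (g := fun P => 2 * f P)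
    (((contDiff_cx.mul (Dw_contDiff ex hf)).add
      (contDiff_cy.mul (Dw_contDiff ey hf))).differentiable (by norm_num))
    (((contDiff_const (c := (2:ℝ))).mul hf).differentiable (by norm_num))
  have h4 := Dw_add (w := w)
    ((contDiff_cx.mul (Dw_contDiff ex hf)).differentiable (by norm_num))
    ((contDiff_cy.mul (Dw_contDiff ey hf)).differentiable (by norm_num))
  show Dw w (fun P => P.2.1 * Dw ex f P + P.2.2 * Dw ey f P - 2 * f P) = _
  rw [h0, h4, h1, h2, h3]
  funext P
  rw [show Dw w (fun P : ℝ × ℝ × ℝ => P.2.1) = fun _ => w.2.1 from Dw_coord_x,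
      show Dw w (fun P : ℝ × ℝ × ℝ => P.2.2) = fun _ => w.2.2 from Dw_coord_y]
  ring

variable {h : ℝ × ℝ × ℝ → ℝ}

theorem jacobi (hf : ContDiff ℝ ∞ f) (hg : ContDiff ℝ ∞ g) (hh : ContDiff ℝ ∞ h) :
    ∀ P, Jw f (Jw g h) P = Jw (Jw f g) h P + Jw g (Jw f h) P := by
  intro P
  have e1 := congrFun (Dw_Jw ex hg hh) P
  have e2 := congrFun (Dw_Jw ey hg hh) P
  have e3 := congrFun (Dw_Jw ex hf hg) P
  have e4 := congrFun (Dw_Jw ey hf hg) P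
  have e5 := congrFun (Dw_Jw ex hf hh) P
  have e6 := congrFun (Dw_Jw ey hf hh) P
  show Dw ex f P * Dw ey (Jw g h) P - Dw ey f P * Dw ex (Jw g h) P =
    (Dw ex (Jw f g) P * Dw ey h P - Dw ey (Jw f g) P * Dw ex h P) +
    (Dw ex g P * Dw ey (Jw f h) P - Dw ey g P * Dw ex (Jw f h) P)
  rw [e1, e2, e3, e4, e5, e6, Dw_comm hf ey ex, Dw_comm hg ey ex, Dw_comm hh ey ex]
  ring

theorem Ew_der (hf : ContDiff ℝ ∞ f) (hg : ContDiff ℝ ∞ g) :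
    ∀ P, Jw f (Ew g) P - Jw g (Ew f) P = Ew (Jw f g) P := by
  intro P
  have e1 := congrFun (Dw_Ew ex hg) P
  have e2 := congrFun (Dw_Ew ey hg) P
  have e3 := congrFun (Dw_Ew ex hf) P
  have e4 := congrFun (Dw_Ew ey hf) P
  have e5 := congrFun (Dw_Jw ex hf hg) P
  have e6 := congrFun (Dw_Jw ey hf hg) P
  show (Dw ex f P * Dw ey (Ew g) P - Dw ey f P * Dw ex (Ew g) P)
      - (Dw ex g P * Dw ey (Ew f) P - Dw ey g P * Dw ex (Ew f) P)
      = P.2.1 * Dw ex (Jw f g) P + P.2.2 * Dw ey (Jw f g) P - 2 * Jw f g P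
  rw [e1, e2, e3, e4, e5, e6, Dw_comm hf ey ex, Dw_comm hg ey ex]
  show _ = _ - 2 * (Dw ex f P * Dw ey g P - Dw ey f P * Dw ex g P)
  simp only [ex, ey]
  ring

theorem Dt_Jw (hf : ContDiff ℝ ∞ f) (hg : ContDiff ℝ ∞ g) :
    Dw et (Jw f g) = fun P => Jw (Dw et f) g P + Jw f (Dw et g) P := by
  funext P
  rw [congrFun (Dw_Jw et hf hg) P]
  show _ = (Dw ex (Dw et f) P * Dw ey g P - Dw ey (Dw et f) P * Dw ex g P)
    + (Dw ex f P * Dw ey (Dw et g) P - Dw ey f P * Dw ex (Dw et g) P)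
  rw [Dw_comm hf ex et, Dw_comm hf ey et, Dw_comm hg ex et, Dw_comm hg ey et]
  ring

theorem Dt_Ew (hf : ContDiff ℝ ∞ f) :
    Dw et (Ew f) = fun P => Ew (Dw et f) P := by
  funext P
  rw [congrFun (Dw_Ew et hf) P]
  show _ = P.2.1 * Dw ex (Dw et f) P + P.2.2 * Dw ey (Dw et f) P - 2 * Dw et f P
  rw [Dw_comm hf ex et, Dw_comm hf ey et]
  simp only [et]
  ring

theorem Dw_neg : Dw w (fun P => -g P) = fun P => -Dw w g P := by
  funext P; simp [Dw, fderiv_neg]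

theorem Jw_add_left (hf : Differentiable ℝ f) (hg : Differentiable ℝ g) :
    Jw (fun P => f P + g P) h = fun P => Jw f h P + Jw g h P := by
  funext P
  show Dw ex _ P * Dw ey h P - Dw ey _ P * Dw ex h P = _
  rw [Dw_add hf hg, Dw_add hf hg]
  show _ = (Dw ex f P * Dw ey h P - Dw ey f P * Dw ex h P)
    + (Dw ex g P * Dw ey h P - Dw ey g P * Dw ex h P)
  ring

theorem Jw_sub_left (hf : Differentiable ℝ f) (hg : Differentiable ℝ g) :
    Jw (fun P => f P - g P) h = fun P => Jw f h P - Jw g h P := by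
  funext P
  show Dw ex _ P * Dw ey h P - Dw ey _ P * Dw ex h P = _
  rw [Dw_sub hf hg, Dw_sub hf hg]
  show _ = (Dw ex f P * Dw ey h P - Dw ey f P * Dw ex h P)
    - (Dw ex g P * Dw ey h P - Dw ey g P * Dw ex h P)
  ring

theorem Jw_const_mul_left (hf : Differentiable ℝ f) (c : ℝ) :
    Jw (fun P => c * f P) h = fun P => c * Jw f h P := by
  funext P
  show Dw ex _ P * Dw ey h P - Dw ey _ P * Dw ex h P = _
  rw [Dw_const_mul hf c, Dw_const_mul hf c]
  show _ = c * (Dw ex f P * Dw ey h P - Dw ey f P * Dw ex h P)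
  ring

theorem Jw_neg_right (hg : Differentiable ℝ g) :
    Jw f (fun P => -g P) = fun P => -Jw f g P := by
  funext P
  show Dw ex f P * Dw ey _ P - Dw ey f P * Dw ex _ P = _
  rw [Dw_neg, Dw_neg]
  show _ = -(Dw ex f P * Dw ey g P - Dw ey f P * Dw ex g P)
  ring

theorem Jw_add_right (hg : Differentiable ℝ g) (hh : Differentiable ℝ h) :
    Jw f (fun P => g P + h P) = fun P => Jw f g P + Jw f h P := by
  funext P
  show Dw ex f P * Dw ey _ P - Dw ey f P * Dw ex _ P = _
  rw [Dw_add hg hh, Dw_add hg hh]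
  show _ = (Dw ex f P * Dw ey g P - Dw ey f P * Dw ex g P)
    + (Dw ex f P * Dw ey h P - Dw ey f P * Dw ex h P)
  ring

theorem Ew_sub (hf : Differentiable ℝ f) (hg : Differentiable ℝ g) :
    Ew (fun P => f P - g P) = fun P => Ew f P - Ew g P := by
  funext P
  show P.2.1 * Dw ex _ P + P.2.2 * Dw ey _ P - 2 * (f P - g P) = _
  rw [Dw_sub hf hg, Dw_sub hf hg]
  show _ = (P.2.1 * Dw ex f P + P.2.2 * Dw ey f P - 2 * f P)
    - (P.2.1 * Dw ex g P + P.2.2 * Dw ey g P - 2 * g P)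
  ring

theorem diffOf (hf : ContDiff ℝ ∞ f) : Differentiable ℝ f :=
  hf.differentiable (by norm_num)

theorem J3_eq (hf : ContDiff ℝ ∞ f) (hg : ContDiff ℝ ∞ g) : J3 f g = Jw f g := by
  funext P
  show px3 f P * py3 g P - py3 f P * px3 g P
    = Dw ex f P * Dw ey g P - Dw ey f P * Dw ex g P
  rw [px3_eq (diffOf hf), py3_eq (diffOf hg), py3_eq (diffOf hf), px3_eq (diffOf hg)]

theorem Eop3_eq (hf : ContDiff ℝ ∞ f) : Eop3 f = Ew f := by
  funext P
  show P.2.1 * px3 f P + P.2.2 * py3 f P - 2 * f P = _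
  rw [px3_eq (diffOf hf), py3_eq (diffOf hf)]
  rfl

theorem pt3_eq' (hf : ContDiff ℝ ∞ f) : pt3 f = Dw et f := pt3_eq (diffOf hf)

theorem lap3_eq (hf : ContDiff ℝ ∞ f) :
    lap3 f = fun P => Dw ex (Dw ex f) P + Dw ey (Dw ey f) P := by
  funext P
  show px3 (px3 f) P + py3 (py3 f) P = _
  rw [px3_eq (diffOf hf), py3_eq (diffOf hf),
      px3_eq (Dw_diff ex hf), py3_eq (Dw_diff ey hf)]

theorem lap3_contDiff (hf : ContDiff ℝ ∞ f) : ContDiff ℝ ∞ (lap3 f) := by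
  rw [lap3_eq hf]
  exact (Dw_contDiff ex (Dw_contDiff ex hf)).add (Dw_contDiff ey (Dw_contDiff ey hf))

theorem Eop3_contDiff (hf : ContDiff ℝ ∞ f) : ContDiff ℝ ∞ (Eop3 f) := by
  rw [Eop3_eq hf]; exact Ew_contDiff hf

theorem Jw_zero_right : Jw f (fun _ => (0:ℝ)) = fun _ => 0 := by
  funext P
  show Dw ex f P * Dw ey (fun _ => (0:ℝ)) P - Dw ey f P * Dw ex (fun _ => (0:ℝ)) P = 0
  rw [Dw_const (w := ex) (0:ℝ), Dw_const (w := ey) (0:ℝ)]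
  ring

theorem Jw_const_mul_right (hg : Differentiable ℝ g) (c : ℝ) :
    Jw f (fun P => c * g P) = fun P => c * Jw f g P := by
  funext P
  show Dw ex f P * Dw ey _ P - Dw ey f P * Dw ex _ P = _
  rw [Dw_const_mul hg c, Dw_const_mul hg c]
  show _ = c * (Dw ex f P * Dw ey g P - Dw ey f P * Dw ex g P)
  ring

end Aux

open Aux
open scoped ContDiff

theorem imhd_second_covering_compatibility
    (u v p q : ℝ × ℝ × ℝ → ℝ) (l : ℝ)
    (hu : ContDiff ℝ (⊤ : ℕ∞) u) (hv : ContDiff ℝ (⊤ : ℕ∞) v)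
    (hp : ContDiff ℝ (⊤ : ℕ∞) p) (hq : ContDiff ℝ (⊤ : ℕ∞) q)
    (hpt : ∀ P, pt3 p P = J3 u p P)
    (hpz : ∀ P, (0 : ℝ) = J3 v p P)
    (hqt : ∀ P, pt3 q P = J3 u q P + J3 (fun Q => lap3 v Q + l * Eop3 u Q) p P)
    (hqz : ∀ P, (0 : ℝ) = J3 v q P + J3 (fun Q => lap3 u Q + l * Eop3 v Q) p P) :
    ∀ P, J3 (G2 u v) q P + J3 (fun Q => G1 u v Q + l * Eop3 (G2 u v) Q) p P = 0 := by
  have su : ContDiff ℝ ∞ u := hu.of_le (by simp)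
  have sv : ContDiff ℝ ∞ v := hv.of_le (by simp)
  have sp : ContDiff ℝ ∞ p := hp.of_le (by simp)
  have sq : ContDiff ℝ ∞ q := hq.of_le (by simp)
  -- the coefficient functions
  set Af : ℝ × ℝ × ℝ → ℝ := fun Q => lap3 v Q + l * Ew u Q with hAf
  set Bf : ℝ × ℝ × ℝ → ℝ := fun Q => lap3 u Q + l * Ew v Q with hBf
  have sA : ContDiff ℝ ∞ Af := by
    rw [hAf]; exact (lap3_contDiff sv).add (contDiff_const.mul (Ew_contDiff su))
  have sB : ContDiff ℝ ∞ Bf := by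
    rw [hBf]; exact (lap3_contDiff su).add (contDiff_const.mul (Ew_contDiff sv))
  have hAconv : (fun Q => lap3 v Q + l * Eop3 u Q) = Af := by
    rw [hAf]; funext R; rw [Eop3_eq su]
  have hBconv : (fun Q => lap3 u Q + l * Eop3 v Q) = Bf := by
    rw [hBf]; funext R; rw [Eop3_eq sv]
  -- hypotheses in Dw-world
  have hp1 : Dw et p = Jw u p := by
    funext R
    have h := hpt R
    rwa [pt3_eq' sp, J3_eq su sp] at h
  have hp0 : Jw v p = fun _ => (0:ℝ) := by
    funext R
    have h := hpz R
    rw [J3_eq sv sp] at h; exact h.symm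
  have hq1 : Dw et q = fun R => Jw u q R + Jw Af p R := by
    funext R
    have h := hqt R
    rwa [pt3_eq' sq, hAconv, J3_eq su sq, J3_eq sA sp] at h
  have hq0 : (fun R => Jw v q R + Jw Bf p R) = fun _ => (0:ℝ) := by
    funext R
    have h := hqz R
    rw [hBconv, J3_eq sv sq, J3_eq sB sp] at h; exact h.symm
  -- differentiability abbreviations
  have slapu := lap3_contDiff su
  have slapv := lap3_contDiff sv
  have dJvq : Differentiable ℝ (Jw v q) := diffOf (Jw_contDiff sv sq)
  have dJBp : Differentiable ℝ (Jw Bf p) := diffOf (Jw_contDiff sB sp)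
  -- differentiate hq0 in t
  have e0 : Dw et (fun R => Jw v q R + Jw Bf p R) = fun _ => (0:ℝ) := by
    rw [hq0]; exact Dw_const 0
  have e1 : Dw et (fun R => Jw v q R + Jw Bf p R)
      = fun R => Dw et (Jw v q) R + Dw et (Jw Bf p) R := Dw_add dJvq dJBp
  have E2 : Dw et (Jw v q) = fun R => Jw (Dw et v) q R + Jw v (Dw et q) R := Dt_Jw sv sq
  have E3 : Dw et (Jw Bf p) = fun R => Jw (Dw et Bf) p R + Jw Bf (Dw et p) R := Dt_Jw sB sp
  have E4 : Dw et Bf = fun R => Dw et (lap3 u) R + l * Ew (Dw et v) R := by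
    rw [hBf, Dw_add (diffOf slapu) (diffOf (contDiff_const.mul (Ew_contDiff sv))),
        Dw_const_mul (diffOf (Ew_contDiff sv)) l, Dt_Ew sv]
  have E4b : Jw (Dw et Bf) p
      = fun R => Jw (Dw et (lap3 u)) p R + l * Jw (Ew (Dw et v)) p R := by
    rw [E4, Jw_add_left (Dw_diff et slapu)
        (diffOf (contDiff_const.mul (Ew_contDiff (Dw_contDiff et sv)))),
        Jw_const_mul_left (diffOf (Ew_contDiff (Dw_contDiff et sv))) l]
  have E5 : Jw v (Dw et q) = fun R => Jw v (Jw u q) R + Jw v (Jw Af p) R := by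
    rw [hq1, Jw_add_right (diffOf (Jw_contDiff su sq)) (diffOf (Jw_contDiff sA sp))]
  have E6 : Jw Bf (Dw et p) = Jw Bf (Jw u p) := by rw [hp1]
  have hvq : Jw v q = fun R => -Jw Bf p R := by
    funext R
    have h : Jw v q R + Jw Bf p R = 0 := congrFun hq0 R
    linarith
  have E8 : Jw u (Jw v q) = fun R => -Jw u (Jw Bf p) R := by
    rw [hvq, Jw_neg_right (diffOf (Jw_contDiff sB sp))]
  have E10 : Jw u Bf = fun R => Jw u (lap3 u) R + l * Jw u (Ew v) R := by
    rw [hBf, Jw_add_right (diffOf slapu) (diffOf (contDiff_const.mul (Ew_contDiff sv))),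
        Jw_const_mul_right (diffOf (Ew_contDiff sv)) l]
  have E10b : Jw (Jw u Bf) p
      = fun R => Jw (Jw u (lap3 u)) p R + l * Jw (Jw u (Ew v)) p R := by
    rw [E10, Jw_add_left (diffOf (Jw_contDiff su slapu))
        (diffOf (contDiff_const.mul (Jw_contDiff su (Ew_contDiff sv)))),
        Jw_const_mul_left (diffOf (Jw_contDiff su (Ew_contDiff sv))) l]
  have E13a : Jw v Af = fun R => Jw v (lap3 v) R + l * Jw v (Ew u) R := by
    rw [hAf, Jw_add_right (diffOf slapv) (diffOf (contDiff_const.mul (Ew_contDiff su))),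
        Jw_const_mul_right (diffOf (Ew_contDiff su)) l]
  have E13b : Jw (Jw v Af) p
      = fun R => Jw (Jw v (lap3 v)) p R + l * Jw (Jw v (Ew u)) p R := by
    rw [E13a, Jw_add_left (diffOf (Jw_contDiff sv slapv))
        (diffOf (contDiff_const.mul (Jw_contDiff sv (Ew_contDiff su)))),
        Jw_const_mul_left (diffOf (Jw_contDiff sv (Ew_contDiff su))) l]
  have E12 : Jw Af (Jw v p) = fun _ => (0:ℝ) := by rw [hp0]; exact Jw_zero_right
  have E14 : Jw (Ew (Jw u v)) p
      = fun R => Jw (Jw u (Ew v)) p R - Jw (Jw v (Ew u)) p R := by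
    rw [show Ew (Jw u v) = fun R => Jw u (Ew v) R - Jw v (Ew u) R from
        funext fun R => (Ew_der su sv R).symm,
      Jw_sub_left (diffOf (Jw_contDiff su (Ew_contDiff sv)))
        (diffOf (Jw_contDiff sv (Ew_contDiff su)))]
  -- goal conversion
  have hG2e : G2 u v = fun R => Dw et v R - Jw u v R := by
    funext R
    show pt3 v R - J3 u v R = _
    rw [pt3_eq' sv, J3_eq su sv]
  have sG2 : ContDiff ℝ ∞ (G2 u v) := by
    rw [hG2e]; exact (Dw_contDiff et sv).sub (Jw_contDiff su sv)
  have hG1e : G1 u v = fun R => Dw et (lap3 u) R - Jw u (lap3 u) R + Jw v (lap3 v) R := by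
    funext R
    show pt3 (lap3 u) R - J3 u (lap3 u) R + J3 v (lap3 v) R = _
    rw [pt3_eq' slapu, J3_eq su slapu, J3_eq sv slapv]
  have sG1 : ContDiff ℝ ∞ (G1 u v) := by
    rw [hG1e]
    exact ((Dw_contDiff et slapu).sub (Jw_contDiff su slapu)).add (Jw_contDiff sv slapv)
  have sEG2 : ContDiff ℝ ∞ (Eop3 (G2 u v)) := Eop3_contDiff sG2
  have hEG2 : Eop3 (G2 u v) = fun R => Ew (Dw et v) R - Ew (Jw u v) R := by
    rw [Eop3_eq sG2, hG2e, Ew_sub (Dw_diff et sv) (diffOf (Jw_contDiff su sv))]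
  have sbig : ContDiff ℝ ∞ (fun Q => G1 u v Q + l * Eop3 (G2 u v) Q) :=
    sG1.add (contDiff_const.mul sEG2)
  have GL1 : J3 (G2 u v) q = Jw (G2 u v) q := J3_eq sG2 sq
  have GL2 : J3 (fun Q => G1 u v Q + l * Eop3 (G2 u v) Q) p
      = Jw (fun Q => G1 u v Q + l * Eop3 (G2 u v) Q) p := J3_eq sbig sp
  have Gsplit : Jw (fun Q => G1 u v Q + l * Eop3 (G2 u v) Q) p
      = fun R => Jw (G1 u v) p R + l * Jw (Eop3 (G2 u v)) p R := by
    rw [Jw_add_left (diffOf sG1) (diffOf (contDiff_const.mul sEG2)),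
        Jw_const_mul_left (diffOf sEG2) l]
  have GG2split : Jw (G2 u v) q = fun R => Jw (Dw et v) q R - Jw (Jw u v) q R := by
    rw [hG2e, Jw_sub_left (Dw_diff et sv) (diffOf (Jw_contDiff su sv))]
  have G1split : Jw (G1 u v) p = fun R =>
      Jw (Dw et (lap3 u)) p R - Jw (Jw u (lap3 u)) p R + Jw (Jw v (lap3 v)) p R := by
    rw [hG1e, Jw_add_left ((Dw_diff et slapu).fun_sub (diffOf (Jw_contDiff su slapu)))
        (diffOf (Jw_contDiff sv slapv)),
        Jw_sub_left (Dw_diff et slapu) (diffOf (Jw_contDiff su slapu))]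
  have EG2split : Jw (Eop3 (G2 u v)) p
      = fun R => Jw (Ew (Dw et v)) p R - Jw (Ew (Jw u v)) p R := by
    rw [hEG2, Jw_sub_left (diffOf (Ew_contDiff (Dw_contDiff et sv)))
        (diffOf (Ew_contDiff (Jw_contDiff su sv)))]
  intro P
  have h1 : Dw et (Jw v q) P + Dw et (Jw Bf p) P = 0 :=
    (congrFun e1 P).symm.trans (congrFun e0 P)
  have h2 : Dw et (Jw v q) P = Jw (Dw et v) q P + Jw v (Dw et q) P := congrFun E2 P
  have h3 : Dw et (Jw Bf p) P = Jw (Dw et Bf) p P + Jw Bf (Dw et p) P := congrFun E3 P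
  have h4 : Jw (Dw et Bf) p P
      = Jw (Dw et (lap3 u)) p P + l * Jw (Ew (Dw et v)) p P := congrFun E4b P
  have h5 : Jw v (Dw et q) P = Jw v (Jw u q) P + Jw v (Jw Af p) P := congrFun E5 P
  have h6 : Jw Bf (Dw et p) P = Jw Bf (Jw u p) P := congrFun E6 P
  have h7 : Jw u (Jw v q) P = Jw (Jw u v) q P + Jw v (Jw u q) P := jacobi su sv sq P
  have h8 : Jw u (Jw v q) P = -Jw u (Jw Bf p) P := congrFun E8 P
  have h9 : Jw u (Jw Bf p) P = Jw (Jw u Bf) p P + Jw Bf (Jw u p) P := jacobi su sB sp P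
  have h10 : Jw (Jw u Bf) p P
      = Jw (Jw u (lap3 u)) p P + l * Jw (Jw u (Ew v)) p P := congrFun E10b P
  have h11 : Jw v (Jw Af p) P = Jw (Jw v Af) p P + Jw Af (Jw v p) P := jacobi sv sA sp P
  have h12 : Jw Af (Jw v p) P = 0 := congrFun E12 P
  have h13 : Jw (Jw v Af) p P
      = Jw (Jw v (lap3 v)) p P + l * Jw (Jw v (Ew u)) p P := congrFun E13b P
  have h14 : Jw (Ew (Jw u v)) p P
      = Jw (Jw u (Ew v)) p P - Jw (Jw v (Ew u)) p P := congrFun E14 P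
  have goal_eq : J3 (G2 u v) q P + J3 (fun Q => G1 u v Q + l * Eop3 (G2 u v) Q) p P
      = (Jw (Dw et v) q P - Jw (Jw u v) q P)
        + ((Jw (Dw et (lap3 u)) p P - Jw (Jw u (lap3 u)) p P + Jw (Jw v (lap3 v)) p P)
           + l * (Jw (Ew (Dw et v)) p P - Jw (Ew (Jw u v)) p P)) := by
    rw [GL1, GL2, Gsplit, GG2split, G1split, EG2split]
  rw [goal_eq]
  linear_combination h1 - h2 - h3 - h4 - h5 - h6 + h7 - h8 + h9 + h10 - h11 - h12 - h13 - l * h14
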